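/- Let (M, μ) be a probability measure space, {φ_k : k ∈ ℕ} an orthonormal basis of L²(M, μ) consisting of bounded measurable functions with φ_1 ≡ 1, λ_k ≥ 0 nondecreasing with λ_k → ∞, and let 𝒳 = {x_{n,k}} with weights τ = {τ_{n,k}} be a Marcinkiewicz–Zygmund family for this system with constants A, B > 0 and κ = B/A. Then for each n there exist complex weights w_{n,1},…,w_{n,L_n} such that the quadrature rule I_n(f) = ∑_{k=1}^{L_n} f(x_{n,k}) w_{n,k} satisfies I_n(p) = ∫_M p dμ for all p ∈ 𝒫_n and |I_n(f)| ≤ √κ ‖f‖_∞ for every bounded measurable f; consequently, for every bounded measurable f and every n, |∫_M f dμ − I_n(f)| ≤ (1 + √κ) inf_{p ∈ 𝒫_n} ‖f − p‖_∞. -/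

import Mathlib

/-!
On `𝒫_n` the Marcinkiewicz–Zygmund inequalities bound the integral by the samples in the sup
norm: `|∫ p| ≤ ‖p‖₂ ≤ A^{-1/2} (∑ |p(x_k)|² τ_k)^{1/2} ≤ √(B/A) max_k |p(x_k)|`, where
`∑ τ_k ≤ B` is the upper MZ inequality for `p = φ_1 ≡ 1`. So `(p(x_k))_k ↦ ∫ p` is a well-defined
functional of norm at most `√(B/A)` on a subspace of `ℓ^∞(L_n)`; a Hahn–Banach extension to all
of `ℓ^∞(L_n)` is a quadrature rule, with weights its values on the unit vectors. The error bound
is Lebesgue's argument: the rule is exact on `p`, so only `f - p` contributes.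
-/

open MeasureTheory

noncomputable section

variable {M : Type*} [MeasurableSpace M]

/-- The `k`-th coefficient `f̂(k) = ⟨f, φ_k⟩ = ∫_M f φ̄_k dμ`. -/
def coef (μ : Measure M) (φ : ℕ → M → ℂ) (f : M → ℂ) (k : ℕ) : ℂ :=
  ∫ x, f x * (starRingEnd ℂ) (φ k x) ∂μ

/-- `{φ_k}` is an orthonormal basis of `L²(M,μ)` of bounded measurable functions. -/
def IsBoundedONB (μ : Measure M) (φ : ℕ → M → ℂ) : Prop :=
  (∀ k, Measurable (φ k)) ∧
  (∀ k, ∃ C : ℝ, ∀ x, ‖φ k x‖ ≤ C) ∧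
  (∀ j k, ∫ x, φ j x * (starRingEnd ℂ) (φ k x) ∂μ = if j = k then 1 else 0) ∧
  (∀ f : M → ℂ, MemLp f 2 μ → (∀ k, coef μ φ f k = 0) → f =ᵐ[μ] 0)

/-- `p ∈ 𝒫_n = span{φ_k : λ_k ≤ n}` (pointwise representatives). -/
def IsDiffusionPoly (φ : ℕ → M → ℂ) (lam : ℕ → ℝ) (n : ℕ) (p : M → ℂ) : Prop :=
  ∃ (s : Finset ℕ) (c : ℕ → ℂ), (∀ k ∈ s, lam k ≤ (n : ℝ)) ∧
    p = fun x => ∑ k ∈ s, c k * φ k x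

/-- `‖p‖₂² = ∫_M |p|² dμ`. -/
def L2normSq (μ : Measure M) (p : M → ℂ) : ℝ := ∫ x, ‖p x‖ ^ 2 ∂μ

theorem LinearMap.exists_strongDual_comp_eq_of_norm_le {𝕜 P F : Type*} [RCLike 𝕜]
    [AddCommGroup P] [Module 𝕜 P] [NormedAddCommGroup F] [NormedSpace 𝕜 F]
    (S : P →ₗ[𝕜] F) (J : P →ₗ[𝕜] 𝕜) {C : ℝ} (hC : 0 ≤ C) (hJ : ∀ p, ‖J p‖ ≤ C * ‖S p‖) :
    ∃ Λ : StrongDual 𝕜 F, ‖Λ‖ ≤ C ∧ ∀ p, Λ (S p) = J p := by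
  have hker : LinearMap.ker S ≤ LinearMap.ker J := fun p hp => by
    simpa [LinearMap.mem_ker.1 hp] using hJ p
  let J₀ : LinearMap.range S →ₗ[𝕜] 𝕜 :=
    (LinearMap.ker S).liftQ J hker ∘ₗ S.quotKerEquivRange.symm.toLinearMap
  have hJ₀ : ∀ p, J₀ ⟨S p, LinearMap.mem_range_self S p⟩ = J p := fun p => by
    simp only [J₀, LinearMap.comp_apply, LinearEquiv.coe_coe,
      LinearMap.quotKerEquivRange_symm_apply_image, Submodule.mkQ_apply, Submodule.liftQ_apply]
  have hbound : ∀ v, ‖J₀ v‖ ≤ C * ‖v‖ := by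
    rintro ⟨_, p, rfl⟩
    exact (hJ₀ p).symm ▸ hJ p
  obtain ⟨Λ, hΛ, hnorm⟩ := exists_extension_norm_eq _ (J₀.mkContinuous C hbound)
  exact ⟨Λ, hnorm ▸ LinearMap.mkContinuous_norm_le _ hC hbound,
    fun p => (hΛ _).trans (hJ₀ p)⟩

section Integral

variable {μ : Measure M}

def Submodule.integralₗ (P : Submodule ℂ (M → ℂ)) (hP : ∀ p ∈ P, Integrable p μ) :
    P →ₗ[ℂ] ℂ where
  toFun p := ∫ t, (p : M → ℂ) t ∂μ
  map_add' p q := integral_add (hP p p.2) (hP q q.2)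
  map_smul' c _ := integral_smul c _

theorem norm_integral_sq_le_L2normSq [IsProbabilityMeasure μ] {p : M → ℂ} (hp : MemLp p 2 μ) :
    ‖∫ t, p t ∂μ‖ ^ 2 ≤ L2normSq μ p := by
  have hvar := ProbabilityTheory.variance_nonneg (fun t => ‖p t‖) μ
  rw [ProbabilityTheory.variance_eq_sub hp.norm] at hvar
  calc ‖∫ t, p t ∂μ‖ ^ 2 ≤ (∫ t, ‖p t‖ ∂μ) ^ 2 := by
        gcongr
        exact norm_integral_le_integral_norm _
    _ ≤ L2normSq μ p := by simpa [L2normSq] using hvar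

theorem norm_integral_le_sqrt_mul_norm_samples [IsProbabilityMeasure μ] {ι : Type*} [Fintype ι]
    (x : ι → M) {τ : ι → ℝ} (hτ : ∀ k, 0 ≤ τ k) {A B : ℝ} (hA : 0 < A) (hτB : ∑ k, τ k ≤ B)
    {p : M → ℂ} (hp : MemLp p 2 μ) (hMZ : A * L2normSq μ p ≤ ∑ k, ‖p (x k)‖ ^ 2 * τ k) :
    ‖∫ t, p t ∂μ‖ ≤ Real.sqrt (B / A) * ‖fun k => p (x k)‖ := by
  set v : ι → ℂ := fun k => p (x k)
  have hsamples : ∑ k, ‖v k‖ ^ 2 * τ k ≤ B * ‖v‖ ^ 2 :=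
    calc ∑ k, ‖v k‖ ^ 2 * τ k ≤ ∑ k, ‖v‖ ^ 2 * τ k := by
          gcongr with k
          · exact hτ k
          · exact norm_le_pi_norm v k
      _ ≤ B * ‖v‖ ^ 2 := by
          rw [← Finset.mul_sum, mul_comm]
          exact mul_le_mul_of_nonneg_right hτB (sq_nonneg _)
  have hL2 : L2normSq μ p ≤ B / A * ‖v‖ ^ 2 := by
    rw [div_mul_eq_mul_div, le_div_iff₀ hA]
    linarith
  calc ‖∫ t, p t ∂μ‖ ≤ Real.sqrt (B / A * ‖v‖ ^ 2) :=
        Real.le_sqrt_of_sq_le ((norm_integral_sq_le_L2normSq hp).trans hL2)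
    _ = Real.sqrt (B / A) * ‖v‖ := by
        rw [Real.sqrt_mul' _ (sq_nonneg _), Real.sqrt_sq (norm_nonneg _)]

end Integral

section DiffusionPoly

variable {φ : ℕ → M → ℂ} {lam : ℕ → ℝ} {n : ℕ} {p : M → ℂ}

def diffusionPolys (φ : ℕ → M → ℂ) (lam : ℕ → ℝ) (n : ℕ) : Submodule ℂ (M → ℂ) :=
  Submodule.span ℂ (φ '' {k | lam k ≤ n})

omit [MeasurableSpace M] in
theorem isDiffusionPoly_iff_mem_diffusionPolys :
    IsDiffusionPoly φ lam n p ↔ p ∈ diffusionPolys φ lam n := by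
  constructor
  · rintro ⟨s, c, hs, rfl⟩
    have hsum : (fun t => ∑ k ∈ s, c k * φ k t) = ∑ k ∈ s, c k • φ k := by
      ext t
      simp [Finset.sum_apply]
    rw [hsum]
    exact Submodule.sum_mem _ fun k hk =>
      Submodule.smul_mem _ _ (Submodule.subset_span ⟨k, hs k hk, rfl⟩)
  · intro hp
    obtain ⟨l, hl, rfl⟩ := (Finsupp.mem_span_image_iff_linearCombination ℂ).1 hp
    refine ⟨l.support, l, fun k hk => hl hk, ?_⟩
    ext t
    simp [Finsupp.linearCombination_apply, Finsupp.sum, Finset.sum_apply]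

theorem IsDiffusionPoly.memLp {μ : Measure M} {q : ENNReal} (hφ : ∀ k, MemLp (φ k) q μ)
    (hp : IsDiffusionPoly φ lam n p) : MemLp p q μ := by
  obtain ⟨s, c, -, rfl⟩ := hp
  exact memLp_finsetSum s fun k _ => (hφ k).const_mul (c k)

omit [MeasurableSpace M] in
theorem IsDiffusionPoly.exists_norm_le (hφ : ∀ k, ∃ C : ℝ, ∀ t, ‖φ k t‖ ≤ C)
    (hp : IsDiffusionPoly φ lam n p) : ∃ D : ℝ, ∀ t, ‖p t‖ ≤ D := by
  obtain ⟨s, c, -, rfl⟩ := hp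
  choose C hC using hφ
  refine ⟨∑ k ∈ s, ‖c k‖ * C k, fun t => (norm_sum_le _ _).trans ?_⟩
  gcongr with k
  rw [norm_mul]
  exact mul_le_mul_of_nonneg_left (hC k t) (norm_nonneg _)

omit [MeasurableSpace M] in
theorem diffusionPolys_eq_bot (hmono : Monotone lam) (h0 : ¬lam 0 ≤ n) :
    diffusionPolys φ lam n = ⊥ := by
  have : {k | lam k ≤ n} = ∅ :=
    Set.eq_empty_of_forall_notMem fun k hk => h0 ((hmono (Nat.zero_le k)).trans hk)
  simp [diffusionPolys, this]

theorem exists_strongDual_eq_integral (μ : Measure M) [IsProbabilityMeasure μ]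
    (hφ : ∀ k, MemLp (φ k) 2 μ) (hφ0 : φ 0 = fun _ => (1 : ℂ)) (hmono : Monotone lam)
    {ι : Type*} [Fintype ι] (x : ι → M) {τ : ι → ℝ} (hτ : ∀ k, 0 ≤ τ k) {A B : ℝ} (hA : 0 < A)
    (hMZ : ∀ p : M → ℂ, IsDiffusionPoly φ lam n p →
      A * L2normSq μ p ≤ ∑ k, ‖p (x k)‖ ^ 2 * τ k ∧
      ∑ k, ‖p (x k)‖ ^ 2 * τ k ≤ B * L2normSq μ p) :
    ∃ Λ : StrongDual ℂ (ι → ℂ), ‖Λ‖ ≤ Real.sqrt (B / A) ∧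
      ∀ p, IsDiffusionPoly φ lam n p → Λ (fun k => p (x k)) = ∫ t, p t ∂μ := by
  set P := diffusionPolys φ lam n
  have hP : ∀ p ∈ P, MemLp p 2 μ := fun p hp =>
    (isDiffusionPoly_iff_mem_diffusionPolys.2 hp).memLp hφ
  have hbound : ∀ p : P, ‖∫ t, (p : M → ℂ) t ∂μ‖ ≤
      Real.sqrt (B / A) * ‖fun k => (p : M → ℂ) (x k)‖ := by
    rintro ⟨p, hp⟩
    by_cases h0 : lam 0 ≤ n
    · have hone : IsDiffusionPoly φ lam n (fun _ => 1) :=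
        ⟨{0}, fun _ => 1, by simpa using h0, by simp [hφ0]⟩
      have hτB : ∑ k, τ k ≤ B := by simpa [L2normSq] using (hMZ _ hone).2
      exact norm_integral_le_sqrt_mul_norm_samples x hτ hA hτB (hP p hp)
        (hMZ p (isDiffusionPoly_iff_mem_diffusionPolys.2 hp)).1
    · rw [show P = ⊥ from diffusionPolys_eq_bot hmono h0, Submodule.mem_bot] at hp
      simp only [hp, Pi.zero_apply, integral_zero, norm_zero]
      positivity
  obtain ⟨Λ, hΛ, hS⟩ := LinearMap.exists_strongDual_comp_eq_of_norm_le
    (LinearMap.funLeft ℂ ℂ x ∘ₗ P.subtype)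
    (P.integralₗ fun p hp => (hP p hp).integrable one_le_two) (Real.sqrt_nonneg _) hbound
  exact ⟨Λ, hΛ, fun p hp => hS ⟨p, isDiffusionPoly_iff_mem_diffusionPolys.1 hp⟩⟩

end DiffusionPoly

section Quadrature

variable {ι : Type*} [Fintype ι] (Λ : StrongDual ℂ (ι → ℂ)) {C : ℝ} (x : ι → M)

omit [MeasurableSpace M] in
theorem norm_apply_le_mul_iSup_norm (hΛ : ‖Λ‖ ≤ C) {f : M → ℂ}
    (hf : BddAbove (Set.range fun t => ‖f t‖)) :
    ‖Λ (fun k => f (x k))‖ ≤ C * ⨆ t, ‖f t‖ := by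
  have hsup : ‖fun k => f (x k)‖ ≤ ⨆ t, ‖f t‖ :=
    pi_norm_le_iff_of_nonneg (Real.iSup_nonneg fun t => norm_nonneg _) |>.2
      fun k => le_ciSup hf (x k)
  exact (Λ.le_opNorm _).trans
    (mul_le_mul hΛ hsup (norm_nonneg _) ((norm_nonneg Λ).trans hΛ))

theorem norm_integral_sub_apply_le (μ : Measure M) [IsProbabilityMeasure μ] (hΛ : ‖Λ‖ ≤ C)
    {f p : M → ℂ} (hf : Integrable f μ) (hp : Integrable p μ)
    (hexact : Λ (fun k => p (x k)) = ∫ t, p t ∂μ)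
    (hbdd : BddAbove (Set.range fun t => ‖f t - p t‖)) :
    ‖(∫ t, f t ∂μ) - Λ (fun k => f (x k))‖ ≤ (1 + C) * ⨆ t, ‖f t - p t‖ := by
  have hsplit : (∫ t, f t ∂μ) - Λ (fun k => f (x k)) =
      (∫ t, (f t - p t) ∂μ) - Λ (fun k => f (x k) - p (x k)) := by
    rw [integral_sub hf hp, ← hexact, show (fun k => f (x k) - p (x k)) =
      (fun k => f (x k)) - (fun k => p (x k)) from rfl, map_sub]
    ring
  have hint : ‖∫ t, (f t - p t) ∂μ‖ ≤ ⨆ t, ‖f t - p t‖ := by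
    simpa using norm_integral_le_of_norm_le_const (μ := μ) (ae_of_all _ fun t => le_ciSup hbdd t)
  calc _ ≤ ‖∫ t, (f t - p t) ∂μ‖ + ‖Λ (fun k => f (x k) - p (x k))‖ := by
        rw [hsplit]
        exact norm_sub_le _ _
    _ ≤ (⨆ t, ‖f t - p t‖) + C * ⨆ t, ‖f t - p t‖ :=
        add_le_add hint (norm_apply_le_mul_iSup_norm Λ x hΛ (f := fun t => f t - p t) hbdd)
    _ = (1 + C) * ⨆ t, ‖f t - p t‖ := by ring

end Quadrature

theorem quadrature_rules_general_general
    (μ : Measure M) [IsProbabilityMeasure μ]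
    (φ : ℕ → M → ℂ) (hONB : IsBoundedONB μ φ) (hφ0 : φ 0 = fun _ => (1 : ℂ))
    (lam : ℕ → ℝ) (hmono : Monotone lam)
    (L : ℕ → ℕ) (x : ∀ n, Fin (L n) → M) (τ : ∀ n, Fin (L n) → ℝ)
    (A B : ℝ) (hA : 0 < A) (hτ : ∀ n k, 0 < τ n k)
    (hMZ : ∀ n (p : M → ℂ), IsDiffusionPoly φ lam n p →
      A * L2normSq μ p ≤ ∑ k, ‖p (x n k)‖ ^ 2 * τ n k ∧
      ∑ k, ‖p (x n k)‖ ^ 2 * τ n k ≤ B * L2normSq μ p) :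
    ∀ n : ℕ, ∃ w : Fin (L n) → ℂ,
      (∀ p : M → ℂ, IsDiffusionPoly φ lam n p →
        ∑ k, p (x n k) * w k = ∫ t, p t ∂μ) ∧
      (∀ f : M → ℂ, Measurable f → (∃ C : ℝ, ∀ t, ‖f t‖ ≤ C) →
        ‖∑ k, f (x n k) * w k‖ ≤ Real.sqrt (B / A) * ⨆ t, ‖f t‖) ∧
      (∀ f : M → ℂ, Measurable f → (∃ C : ℝ, ∀ t, ‖f t‖ ≤ C) →
        ∀ p : M → ℂ, IsDiffusionPoly φ lam n p →
          ‖(∫ t, f t ∂μ) - ∑ k, f (x n k) * w k‖ ≤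
            (1 + Real.sqrt (B / A)) * ⨆ t, ‖f t - p t‖) := by
  obtain ⟨hmeas, hbd, -, -⟩ := hONB
  have hφ : ∀ k, MemLp (φ k) 2 μ := fun k =>
    MemLp.of_bound (hmeas k).aestronglyMeasurable _ (ae_of_all _ (hbd k).choose_spec)
  intro n
  obtain ⟨Λ, hΛ, hexact⟩ := exists_strongDual_eq_integral μ hφ hφ0 hmono (x n)
    (fun k => (hτ n k).le) hA (hMZ n)
  have hsum : ∀ v : Fin (L n) → ℂ, ∑ k, v k * Λ (fun j => if k = j then 1 else 0) = Λ v :=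
    fun v => (LinearMap.pi_apply_eq_sum_univ (Λ : (Fin (L n) → ℂ) →ₗ[ℂ] ℂ) v).symm
  refine ⟨fun k => Λ (fun j => if k = j then 1 else 0), fun p hp => ?_, fun f _ ⟨C, hC⟩ => ?_,
    fun f hf ⟨C, hC⟩ p hp => ?_⟩
  · rw [hsum, hexact p hp]
  · rw [hsum]
    exact norm_apply_le_mul_iSup_norm Λ (x n) hΛ ⟨C, Set.forall_mem_range.2 hC⟩
  · obtain ⟨D, hD⟩ := hp.exists_norm_le hbd
    rw [hsum]
    exact norm_integral_sub_apply_le Λ (x n) μ hΛ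
      (Integrable.of_bound hf.aestronglyMeasurable C (ae_of_all _ hC))
      ((hp.memLp hφ).integrable one_le_two) (hexact p hp)
      ⟨C + D, Set.forall_mem_range.2 fun t => (norm_sub_le _ _).trans (add_le_add (hC t) (hD t))⟩

/-- for an MZ family (with `φ_1 ≡ 1`) there exist quadrature weights
`w_{n,k}` such that `I_n(f) = ∑_k f(x_{n,k}) w_{n,k}` is exact on `𝒫_n` and
`|I_n(f)| ≤ √κ ‖f‖_∞` for bounded measurable `f`; consequently
`|∫ f dμ − I_n(f)| ≤ (1+√κ) inf_{p ∈ 𝒫_n} ‖f − p‖_∞` (expressed by quantifying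
over all `p ∈ 𝒫_n`). -/
theorem quadrature_rules_general
    (μ : Measure M) [IsProbabilityMeasure μ]
    (φ : ℕ → M → ℂ) (hONB : IsBoundedONB μ φ) (hφ0 : φ 0 = fun _ => (1 : ℂ))
    (lam : ℕ → ℝ) (hlam0 : ∀ k, 0 ≤ lam k) (hmono : Monotone lam)
    (hlim : Filter.Tendsto lam Filter.atTop Filter.atTop)
    (L : ℕ → ℕ) (x : ∀ n, Fin (L n) → M) (τ : ∀ n, Fin (L n) → ℝ)
    (A B : ℝ) (hA : 0 < A) (hB : 0 < B) (hτ : ∀ n k, 0 < τ n k)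
    (hMZ : ∀ n (p : M → ℂ), IsDiffusionPoly φ lam n p →
      A * L2normSq μ p ≤ ∑ k, ‖p (x n k)‖ ^ 2 * τ n k ∧
      ∑ k, ‖p (x n k)‖ ^ 2 * τ n k ≤ B * L2normSq μ p) :
    ∀ n : ℕ, ∃ w : Fin (L n) → ℂ,
      (∀ p : M → ℂ, IsDiffusionPoly φ lam n p →
        ∑ k, p (x n k) * w k = ∫ t, p t ∂μ) ∧
      (∀ f : M → ℂ, Measurable f → (∃ C : ℝ, ∀ t, ‖f t‖ ≤ C) →
        ‖∑ k, f (x n k) * w k‖ ≤ Real.sqrt (B / A) * ⨆ t, ‖f t‖) ∧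
      (∀ f : M → ℂ, Measurable f → (∃ C : ℝ, ∀ t, ‖f t‖ ≤ C) →
        ∀ p : M → ℂ, IsDiffusionPoly φ lam n p →
          ‖(∫ t, f t ∂μ) - ∑ k, f (x n k) * w k‖ ≤
            (1 + Real.sqrt (B / A)) * ⨆ t, ‖f t - p t‖) :=
  quadrature_rules_general_general μ φ hONB hφ0 lam hmono L x τ A B hA hτ hMZ

end
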